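/- Let G, U be as above (unimodular, U irreducible square-integrable, orthogonality constant 1). If T₁ and T₂ are positive trace-one operators on H such that ∫_X U(g)T₁U(g)⁻¹ dμ_G(g) = ∫_X U(g)T₂U(g)⁻¹ dμ_G(g) (weakly) for every Borel set X ⊆ G, then T₁ = T₂. -/

import Mathlib

/-!
The matrix coefficients `g ↦ ⟪u, U g (Tᵢ (U g⁻¹ v))⟫` are continuous, since the `U g` are
uniformly Lipschitz and strongly continuous. Continuous functions with equal integrals over all
compact sets agree almost everywhere, hence everywhere because a Haar measure charges every
nonempty open set; evaluating at `g = 1` gives `⟪u, T₁ v⟫ = ⟪u, T₂ v⟫`.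
-/

open MeasureTheory Complex

noncomputable section

open Filter Topology

theorem continuous_apply_of_lipschitzWith {X E F : Type*} [TopologicalSpace X]
    [PseudoMetricSpace E] [PseudoMetricSpace F] {f : X → E → F} {K : NNReal}
    (hlip : ∀ x, LipschitzWith K (f x)) (hf : ∀ y, Continuous fun x => f x y)
    {c : X → E} (hc : Continuous c) : Continuous fun x => f x (c x) := by
  refine continuous_iff_continuousAt.2 fun x₀ => ?_
  rw [ContinuousAt, tendsto_iff_dist_tendsto_zero]
  have hbound : Tendsto (fun x => K * dist (c x) (c x₀) + dist (f x (c x₀)) (f x₀ (c x₀)))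
      (𝓝 x₀) (𝓝 0) := by
    simpa using ((tendsto_iff_dist_tendsto_zero.1 (hc.tendsto x₀)).const_mul (K : ℝ)).add
      (tendsto_iff_dist_tendsto_zero.1 ((hf _).tendsto x₀))
  refine squeeze_zero (fun _ => dist_nonneg) (fun x => ?_) hbound
  calc dist (f x (c x)) (f x₀ (c x₀))
      ≤ dist (f x (c x)) (f x (c x₀)) + dist (f x (c x₀)) (f x₀ (c x₀)) := dist_triangle _ _ _
    _ ≤ _ := by gcongr; exact (hlip x).dist_le_mul _ _

theorem Continuous.eq_of_forall_setIntegral_isCompact_eq {X E : Type*} [TopologicalSpace X]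
    [SigmaCompactSpace X] [R1Space X] [MeasurableSpace X] [BorelSpace X]
    [NormedAddCommGroup E] [NormedSpace ℝ E] [CompleteSpace E]
    [SecondCountableTopologyEither X E]
    {μ : Measure X} [IsLocallyFiniteMeasure μ] [μ.IsOpenPosMeasure] {f g : X → E}
    (hf : Continuous f) (hg : Continuous g)
    (hfg : ∀ s, IsCompact s → ∫ x in s, f x ∂μ = ∫ x in s, g x ∂μ) : f = g := by
  have hdiff : f - g =ᵐ[μ] 0 :=
    ae_eq_zero_of_forall_setIntegral_isCompact_eq_zero' (hf.sub hg).locallyIntegrable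
      fun s hs => by
        rw [Pi.sub_def, integral_sub (hf.locallyIntegrable.integrableOn_isCompact hs)
          (hg.locallyIntegrable.integrableOn_isCompact hs), hfg s hs, sub_self]
  exact sub_eq_zero.1 (((hf.sub hg).ae_eq_iff_eq μ continuous_const).1 hdiff)

section Representation

variable {G 𝕜 E : Type*} [Group G] [Semiring 𝕜] [SeminormedAddCommGroup E] [Module 𝕜 E]
  {U : G → E ≃ₗᵢ[𝕜] E}

theorem eq_refl_of_map_mul (hU : ∀ g g', U (g * g') = (U g').trans (U g)) :
    U 1 = LinearIsometryEquiv.refl 𝕜 E :=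
  map_one (MonoidHom.mk' U hU)

theorem symm_eq_inv_of_map_mul (hU : ∀ g g', U (g * g') = (U g').trans (U g)) (g : G) :
    (U g).symm = U g⁻¹ :=
  (map_inv (MonoidHom.mk' U hU) g).symm

end Representation

theorem continuous_inner_conj {G 𝕜 H : Type*} [Group G] [TopologicalSpace G] [ContinuousInv G]
    [RCLike 𝕜] [NormedAddCommGroup H] [InnerProductSpace 𝕜 H] {U : G → H ≃ₗᵢ[𝕜] H}
    (hcont : ∀ v, Continuous fun g => U g v) (T : H →L[𝕜] H) (u v : H) :
    Continuous fun g => inner 𝕜 u (U g (T (U g⁻¹ v))) :=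
  continuous_const.inner <| continuous_apply_of_lipschitzWith (K := 1)
    (fun g => (U g).isometry.lipschitz) hcont (T.continuous.comp ((hcont v).comp continuous_inv))

theorem stmt15 {G : Type*} [Group G] [TopologicalSpace G] [IsTopologicalGroup G]
    [LocallyCompactSpace G] [SecondCountableTopology G] [T2Space G]
    [MeasurableSpace G] [BorelSpace G]
    (μ : Measure G) [μ.IsHaarMeasure]
    {H : Type*} [NormedAddCommGroup H] [InnerProductSpace ℂ H]
    (U : G → (H ≃ₗᵢ[ℂ] H))
    (hgrp : ∀ g g' : G, U (g * g') = (U g').trans (U g))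
    (hcont : ∀ v : H, Continuous fun g => U g v)
    (T₁ T₂ : H →L[ℂ] H)
    (heq : ∀ X : Set G, MeasurableSet X → ∀ u v : H,
      (∫ g in X, (inner ℂ u (U g (T₁ ((U g).symm v))) : ℂ) ∂μ) =
      (∫ g in X, (inner ℂ u (U g (T₂ ((U g).symm v))) : ℂ) ∂μ)) :
    T₁ = T₂ := by
  ext v
  refine ext_inner_left ℂ fun u => ?_
  have hcoeff := (continuous_inner_conj hcont T₁ u v).eq_of_forall_setIntegral_isCompact_eq
    (μ := μ) (continuous_inner_conj hcont T₂ u v) fun K hK => by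
      simpa only [symm_eq_inv_of_map_mul hgrp] using heq K hK.measurableSet u v
  simpa [eq_refl_of_map_mul hgrp] using congrFun hcoeff 1
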